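/- arXiv:1501.04166 — 3 statements merged into one kernel-verified Lean document; each statement's English description precedes it below -/
import Mathlib

section
/- Let F be analytic in the unit ball 𝔹ₙ ⊂ ℂⁿ, b ∈ ℂⁿ a direction, and L : 𝔹ₙ → ℝ₊ continuous. If F has bounded L-index in direction b with index N = N_b(F, L), then for every z⁰ ∈ 𝔹ₙ the slice function g_{z⁰}(t) = F(z⁰ + t b), analytic on S_{z⁰} = {t ∈ ℂ : z⁰ + t b ∈ 𝔹ₙ}, has bounded l_{z⁰}-index with N(g_{z⁰}, l_{z⁰}) ≤ N, where l_{z⁰}(t) = L(z⁰ + t b). The key identity is g_{z⁰}^{(p)}(t) = ∂ᵖF/∂bᵖ(z⁰ + t b) for all p. -/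
open Metric

/-- `p`-th directional derivative of `F` in direction `b` at `z`. -/
noncomputable def dirDeriv {n : ℕ} (F : EuclideanSpace ℂ (Fin n) → ℂ)
    (b : EuclideanSpace ℂ (Fin n)) (p : ℕ) (z : EuclideanSpace ℂ (Fin n)) : ℂ :=
  iteratedDeriv p (fun t : ℂ => F (z + t • b)) 0

/-- `F` has bounded `L`-index in direction `b` with index bound `m₀`. -/
def boundedIndexDir {n : ℕ} (F : EuclideanSpace ℂ (Fin n) → ℂ)
    (b : EuclideanSpace ℂ (Fin n)) (L : EuclideanSpace ℂ (Fin n) → ℝ) (m₀ : ℕ) : Prop :=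
  ∀ m : ℕ, ∀ z ∈ ball (0 : EuclideanSpace ℂ (Fin n)) 1,
    ‖dirDeriv F b m z‖ / ((m.factorial : ℝ) * L z ^ m) ≤
      (Finset.range (m₀ + 1)).sup' Finset.nonempty_range_add_one
        (fun k => ‖dirDeriv F b k z‖ / ((k.factorial : ℝ) * L z ^ k))

/-- One-variable analytic function `g` on the domain `D` has bounded `l`-index
with index bound `m₀`. -/
def oneIndexBounded (g : ℂ → ℂ) (l : ℂ → ℝ) (D : Set ℂ) (m₀ : ℕ) : Prop :=
  ∀ p : ℕ, ∀ t ∈ D,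
    ‖iteratedDeriv p g t‖ / ((p.factorial : ℝ) * l t ^ p) ≤
      (Finset.range (m₀ + 1)).sup' Finset.nonempty_range_add_one
        (fun k => ‖iteratedDeriv k g t‖ / ((k.factorial : ℝ) * l t ^ k))

/-- `N_b(F, L)`: the least index bound in direction `b`. -/
noncomputable def dirIndex {n : ℕ} (F : EuclideanSpace ℂ (Fin n) → ℂ)
    (b : EuclideanSpace ℂ (Fin n)) (L : EuclideanSpace ℂ (Fin n) → ℝ) : ℕ :=
  sInf {m | boundedIndexDir F b L m}

/-- `N(g, l)`: the least one-variable index bound on the domain `D`. -/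
noncomputable def oneIndex (g : ℂ → ℂ) (l : ℂ → ℝ) (D : Set ℂ) : ℕ :=
  sInf {m | oneIndexBounded g l D m}

theorem iteratedDeriv_comp_add_smul {𝕜 E F : Type*} [NontriviallyNormedField 𝕜]
    [AddCommGroup E] [Module 𝕜 E] [NormedAddCommGroup F] [NormedSpace 𝕜 F]
    (f : E → F) (z b : E) (p : ℕ) (t : 𝕜) :
    iteratedDeriv p (fun s : 𝕜 => f (z + s • b)) t =
      iteratedDeriv p (fun s : 𝕜 => f (z + t • b + s • b)) 0 := by
  have hshift : (fun s : 𝕜 => f (z + t • b + s • b)) = fun s => f (z + (t + s) • b) := by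
    funext s
    rw [add_smul, add_assoc]
  rw [hshift, iteratedDeriv_comp_const_add (f := fun s => f (z + s • b))]
  simp only [add_zero]


theorem iteratedDeriv_slice_eq_dirDeriv {n : ℕ} (F : EuclideanSpace ℂ (Fin n) → ℂ)
    (z b : EuclideanSpace ℂ (Fin n)) (p : ℕ) (t : ℂ) :
    iteratedDeriv p (fun s : ℂ => F (z + s • b)) t = dirDeriv F b p (z + t • b) :=
  iteratedDeriv_comp_add_smul F z b p t

theorem boundedIndexDir.oneIndexBounded_slice {n : ℕ} {F : EuclideanSpace ℂ (Fin n) → ℂ}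
    {b : EuclideanSpace ℂ (Fin n)} {L : EuclideanSpace ℂ (Fin n) → ℝ} {N : ℕ}
    (hN : boundedIndexDir F b L N) (z : EuclideanSpace ℂ (Fin n)) :
    oneIndexBounded (fun t : ℂ => F (z + t • b)) (fun t : ℂ => L (z + t • b))
      {t : ℂ | z + t • b ∈ ball (0 : EuclideanSpace ℂ (Fin n)) 1} N := by
  intro p t ht
  simp only [iteratedDeriv_slice_eq_dirDeriv]
  exact hN p (z + t • b) ht

theorem stmt9_general (n : ℕ) (F : EuclideanSpace ℂ (Fin n) → ℂ)
    (b : EuclideanSpace ℂ (Fin n)) (L : EuclideanSpace ℂ (Fin n) → ℝ)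
    (N : ℕ) (hN : boundedIndexDir F b L N) :
    ∀ z0 ∈ ball (0 : EuclideanSpace ℂ (Fin n)) 1,
      (∀ (p : ℕ) (t : ℂ), z0 + t • b ∈ ball (0 : EuclideanSpace ℂ (Fin n)) 1 →
          iteratedDeriv p (fun s : ℂ => F (z0 + s • b)) t = dirDeriv F b p (z0 + t • b)) ∧
        oneIndexBounded (fun t : ℂ => F (z0 + t • b)) (fun t : ℂ => L (z0 + t • b))
          {t : ℂ | z0 + t • b ∈ ball (0 : EuclideanSpace ℂ (Fin n)) 1} N ∧
        oneIndex (fun t : ℂ => F (z0 + t • b)) (fun t : ℂ => L (z0 + t • b))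
          {t : ℂ | z0 + t • b ∈ ball (0 : EuclideanSpace ℂ (Fin n)) 1} ≤ N := by
  intro z0 _
  have hslice := hN.oneIndexBounded_slice z0
  exact ⟨fun p t _ => iteratedDeriv_slice_eq_dirDeriv F z0 b p t, hslice, Nat.sInf_le hslice⟩

/-- if `F` (analytic in the unit ball) has bounded `L`-index in
direction `b` with index `N = N_b(F,L)`, then for every `z⁰` in the ball the
slice `g_{z⁰}(t) = F(z⁰ + t b)` satisfies `g_{z⁰}^{(p)}(t) = ∂ᵖF/∂bᵖ(z⁰ + t b)`
and has bounded `l_{z⁰}`-index on `S_{z⁰}` with `N(g_{z⁰}, l_{z⁰}) ≤ N`. -/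
theorem stmt9 (n : ℕ) (F : EuclideanSpace ℂ (Fin n) → ℂ)
    (b : EuclideanSpace ℂ (Fin n)) (L : EuclideanSpace ℂ (Fin n) → ℝ)
    (hFa : AnalyticOnNhd ℂ F (ball (0 : EuclideanSpace ℂ (Fin n)) 1))
    (hLc : ContinuousOn L (ball (0 : EuclideanSpace ℂ (Fin n)) 1))
    (hLpos : ∀ z ∈ ball (0 : EuclideanSpace ℂ (Fin n)) 1, 0 < L z)
    (N : ℕ) (hN : boundedIndexDir F b L N) (hNleast : dirIndex F b L = N) :
    ∀ z0 ∈ ball (0 : EuclideanSpace ℂ (Fin n)) 1,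
      (∀ (p : ℕ) (t : ℂ), z0 + t • b ∈ ball (0 : EuclideanSpace ℂ (Fin n)) 1 →
          iteratedDeriv p (fun s : ℂ => F (z0 + s • b)) t = dirDeriv F b p (z0 + t • b)) ∧
        oneIndexBounded (fun t : ℂ => F (z0 + t • b)) (fun t : ℂ => L (z0 + t • b))
          {t : ℂ | z0 + t • b ∈ ball (0 : EuclideanSpace ℂ (Fin n)) 1} N ∧
        oneIndex (fun t : ℂ => F (z0 + t • b)) (fun t : ℂ => L (z0 + t • b))
          {t : ℂ | z0 + t • b ∈ ball (0 : EuclideanSpace ℂ (Fin n)) 1} ≤ N :=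
  stmt9_general n F b L N hN
end

section
/- Let F be analytic in 𝔹ₙ, b ∈ ℂⁿ, L : 𝔹ₙ → ℝ₊ continuous, and suppose there exists M ∈ ℤ₊ such that for every z⁰ ∈ 𝔹ₙ the slice function g_{z⁰}(t) = F(z⁰ + t b) has bounded l_{z⁰}-index with N(g_{z⁰}, l_{z⁰}) ≤ M, where l_{z⁰}(t) = L(z⁰ + t b). Then F has bounded L-index in direction b and N_b(F, L) = sup{N(g_{z⁰}, l_{z⁰}) : z⁰ ∈ 𝔹ₙ}. -/
/-!
Restricted to the line `t ↦ z⁰ + t b`, the `p`-th directional derivative of `F` is the `p`-th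
derivative of the slice `g_{z⁰}`, so `F` has bounded `L`-index in direction `b` with bound `m`
exactly when every slice has bounded `l_{z⁰}`-index with bound `m`. Both kinds of index bound are
upward closed, and the least common bound of a family of upward-closed sets of naturals with a
common element is the supremum of their least elements.
-/

open Metric

theorem Nat.sInf_setOf_forall_eq_iSup {ι : Type*} {s : Set ι} {P : ι → ℕ → Prop}
    (hP : ∀ i ∈ s, Monotone (P i)) {M : ℕ} (hM : ∀ i ∈ s, P i M) :
    sInf {m | ∀ i ∈ s, P i m} = ⨆ i ∈ s, sInf {m | P i m} := by
  have hbdd : BddAbove (⋃ i, Set.range fun _ : i ∈ s => sInf {m | P i m}) := by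
    refine ⟨M, fun _ hx => ?_⟩
    obtain ⟨i, hi, rfl⟩ := Set.mem_iUnion.mp hx
    exact Nat.sInf_le (hM i hi)
  apply le_antisymm
  · refine Nat.sInf_le fun i hi => hP i hi (le_ciSup₂ hbdd i hi) ?_
    exact Nat.sInf_mem ⟨M, hM i hi⟩
  · have hmem : ∀ i ∈ s, P i (sInf {m | ∀ i ∈ s, P i m}) :=
      Nat.sInf_mem (s := {m | ∀ i ∈ s, P i m}) ⟨M, hM⟩
    exact ciSup_le' fun i => ciSup_le' fun hi => Nat.sInf_le (hmem i hi)

theorem oneIndexBounded_monotone (g : ℂ → ℂ) (l : ℂ → ℝ) (D : Set ℂ) :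
    Monotone (oneIndexBounded g l D) := by
  intro m m' hmm h p t ht
  exact (h p t ht).trans <| Finset.sup'_mono _
    (Finset.range_subset_range.mpr (Nat.succ_le_succ hmm)) Finset.nonempty_range_add_one

section Slices

variable {n : ℕ} (F : EuclideanSpace ℂ (Fin n) → ℂ) (b : EuclideanSpace ℂ (Fin n))

theorem iteratedDeriv_slice (z0 : EuclideanSpace ℂ (Fin n)) (p : ℕ) (t : ℂ) :
    iteratedDeriv p (fun s : ℂ => F (z0 + s • b)) t = dirDeriv F b p (z0 + t • b) := by
  have hshift : (fun s : ℂ => F (z0 + t • b + s • b)) = fun s : ℂ => F (z0 + (t + s) • b) := by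
    funext s
    rw [add_smul, add_assoc]
  rw [dirDeriv, hshift,
    iteratedDeriv_comp_const_add p (fun s : ℂ => F (z0 + s • b)) t]
  simp only [add_zero]

theorem boundedIndexDir_iff_forall_oneIndexBounded (L : EuclideanSpace ℂ (Fin n) → ℝ) (m : ℕ) :
    boundedIndexDir F b L m ↔
      ∀ z0 ∈ ball (0 : EuclideanSpace ℂ (Fin n)) 1,
        oneIndexBounded (fun t : ℂ => F (z0 + t • b)) (fun t : ℂ => L (z0 + t • b))
          {t : ℂ | z0 + t • b ∈ ball (0 : EuclideanSpace ℂ (Fin n)) 1} m := by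
  constructor
  · intro h z0 _ p t ht
    simpa only [iteratedDeriv_slice] using h p (z0 + t • b) ht
  · intro h p z hz
    simpa only [iteratedDeriv_slice, zero_smul, add_zero] using h z hz p 0 (by simpa using hz)

end Slices

theorem stmt10_general (n : ℕ) (F : EuclideanSpace ℂ (Fin n) → ℂ)
    (b : EuclideanSpace ℂ (Fin n)) (L : EuclideanSpace ℂ (Fin n) → ℝ)
    (M : ℕ)
    (hM : ∀ z0 ∈ ball (0 : EuclideanSpace ℂ (Fin n)) 1,
      oneIndexBounded (fun t : ℂ => F (z0 + t • b)) (fun t : ℂ => L (z0 + t • b))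
        {t : ℂ | z0 + t • b ∈ ball (0 : EuclideanSpace ℂ (Fin n)) 1} M) :
    (∃ m : ℕ, boundedIndexDir F b L m) ∧
      dirIndex F b L =
        ⨆ z0 ∈ ball (0 : EuclideanSpace ℂ (Fin n)) 1,
          oneIndex (fun t : ℂ => F (z0 + t • b)) (fun t : ℂ => L (z0 + t • b))
            {t : ℂ | z0 + t • b ∈ ball (0 : EuclideanSpace ℂ (Fin n)) 1} := by
  refine ⟨⟨M, (boundedIndexDir_iff_forall_oneIndexBounded F b L M).mpr hM⟩, ?_⟩
  simp only [dirIndex, oneIndex, boundedIndexDir_iff_forall_oneIndexBounded]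
  exact Nat.sInf_setOf_forall_eq_iSup (fun z0 _ => oneIndexBounded_monotone _ _ _) hM

/-- if there is `M` such that every slice `g_{z⁰}(t) = F(z⁰ + t b)`
has bounded `l_{z⁰}`-index on `S_{z⁰}` with bound `M`, then `F` has bounded
`L`-index in direction `b`, and
`N_b(F, L) = sup{N(g_{z⁰}, l_{z⁰}) : z⁰ ∈ 𝔹ₙ}`. -/
theorem stmt10 (n : ℕ) (F : EuclideanSpace ℂ (Fin n) → ℂ)
    (b : EuclideanSpace ℂ (Fin n)) (L : EuclideanSpace ℂ (Fin n) → ℝ)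
    (hFa : AnalyticOnNhd ℂ F (ball (0 : EuclideanSpace ℂ (Fin n)) 1))
    (hLc : ContinuousOn L (ball (0 : EuclideanSpace ℂ (Fin n)) 1))
    (hLpos : ∀ z ∈ ball (0 : EuclideanSpace ℂ (Fin n)) 1, 0 < L z)
    (M : ℕ)
    (hM : ∀ z0 ∈ ball (0 : EuclideanSpace ℂ (Fin n)) 1,
      oneIndexBounded (fun t : ℂ => F (z0 + t • b)) (fun t : ℂ => L (z0 + t • b))
        {t : ℂ | z0 + t • b ∈ ball (0 : EuclideanSpace ℂ (Fin n)) 1} M) :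
    (∃ m : ℕ, boundedIndexDir F b L m) ∧
      dirIndex F b L =
        ⨆ z0 ∈ ball (0 : EuclideanSpace ℂ (Fin n)) 1,
          oneIndex (fun t : ℂ => F (z0 + t • b)) (fun t : ℂ => L (z0 + t • b))
            {t : ℂ | z0 + t • b ∈ ball (0 : EuclideanSpace ℂ (Fin n)) 1} :=
  stmt10_general n F b L M hM
end

section
/- Let F be analytic in 𝔹ₙ, b ∈ ℂⁿ, L : 𝔹ₙ → ℝ₊ continuous, and let A ⊂ 𝔹ₙ be dense in 𝔹ₙ. Suppose there is M ∈ ℤ₊ such that for every z⁰ ∈ A and all t ∈ S_{z⁰}, p ∈ ℤ₊: (1/(p! L(z⁰+tb)ᵖ))|∂ᵖF/∂bᵖ(z⁰+tb)| ≤ max{(1/(k! L(z⁰+tb)ᵏ))|∂ᵏF/∂bᵏ(z⁰+tb)| : 0 ≤ k ≤ M}. Then the same inequality holds for all z⁰ ∈ 𝔹ₙ, t ∈ S_{z⁰}, p ∈ ℤ₊; hence F has bounded L-index in direction b with N_b(F,L) ≤ M. -/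
open Metric

/-!
Along the complex line through `z` in direction `b`, the `p`-th derivative of `F` at `z` is the
value at `z` of the `p`-fold iterated directional derivative `w ↦ DᵖF(w)(b, …, b)`, an analytic
function of `w`. Hence each ratio `‖∂ᵖF/∂bᵖ(z)‖ / (p! L(z)ᵖ)` is continuous on the ball where
`L > 0`, and so is the maximum over `k ≤ M`; a non-strict inequality between continuous functions
that holds on a dense subset holds everywhere.
-/

section IteratedFDerivApply

variable {𝕜 E F : Type*} [NontriviallyNormedField 𝕜] [NormedAddCommGroup E] [NormedSpace 𝕜 E]
  [NormedAddCommGroup F] [NormedSpace 𝕜 F]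

variable (𝕜) in
noncomputable def iterFDerivApply (b : E) : (E → F) → ℕ → E → F
  | G, 0 => G
  | G, p + 1 => iterFDerivApply b (fun w => fderiv 𝕜 G w b) p

variable [CompleteSpace F] {U : Set E}

theorem AnalyticOnNhd.iterFDerivApply (b : E) (p : ℕ) {G : E → F}
    (hG : AnalyticOnNhd 𝕜 G U) : AnalyticOnNhd 𝕜 (iterFDerivApply 𝕜 b G p) U := by
  induction p generalizing G with
  | zero => exact hG
  | succ p ih => exact ih ((ContinuousLinearMap.apply 𝕜 F b).comp_analyticOnNhd hG.fderiv)

theorem iteratedDeriv_comp_line_eq_iterFDerivApply (hU : IsOpen U) (b : E) (p : ℕ) {G : E → F}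
    (hG : AnalyticOnNhd 𝕜 G U) {z : E} (hz : z ∈ U) :
    iteratedDeriv p (fun t : 𝕜 => G (z + t • b)) 0 = iterFDerivApply 𝕜 b G p z := by
  induction p generalizing G with
  | zero => simp [iterFDerivApply]
  | succ p ih =>
    have hline : Continuous fun t : 𝕜 => z + t • b := by fun_prop
    have hderiv : deriv (fun s : 𝕜 => G (z + s • b)) =ᶠ[nhds 0]
        fun t => fderiv 𝕜 G (z + t • b) b := by
      filter_upwards [hline.continuousAt.preimage_mem_nhds (by simpa using hU.mem_nhds hz)]
        with t ht
      have hlineDeriv : HasDerivAt (fun s : 𝕜 => z + s • b) b t := by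
        simpa using ((hasDerivAt_id t).smul_const b).const_add z
      exact ((hG.differentiableOn.differentiableAt (hU.mem_nhds ht)).hasFDerivAt.comp_hasDerivAt
        t hlineDeriv).deriv
    rw [iteratedDeriv_succ', hderiv.iteratedDeriv_eq p]
    exact ih ((ContinuousLinearMap.apply 𝕜 F b).comp_analyticOnNhd hG.fderiv)

end IteratedFDerivApply

section IndexRatio

variable {n : ℕ} {F : EuclideanSpace ℂ (Fin n) → ℂ} {b : EuclideanSpace ℂ (Fin n)}
  {L : EuclideanSpace ℂ (Fin n) → ℝ} {U : Set (EuclideanSpace ℂ (Fin n))}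

theorem continuousOn_dirDeriv (hU : IsOpen U) (hF : AnalyticOnNhd ℂ F U) (p : ℕ) :
    ContinuousOn (dirDeriv F b p) U :=
  ((hF.iterFDerivApply b p).continuousOn).congr fun _ hz =>
    iteratedDeriv_comp_line_eq_iterFDerivApply hU b p hF hz

variable (F b L) in
noncomputable def indexRatio (p : ℕ) (z : EuclideanSpace ℂ (Fin n)) : ℝ :=
  ‖dirDeriv F b p z‖ / ((p.factorial : ℝ) * L z ^ p)

theorem continuousOn_indexRatio (hU : IsOpen U) (hF : AnalyticOnNhd ℂ F U)
    (hL : ContinuousOn L U) (hLpos : ∀ z ∈ U, 0 < L z) (p : ℕ) :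
    ContinuousOn (indexRatio F b L p) U :=
  (continuousOn_dirDeriv hU hF p).norm.div (continuousOn_const.mul (hL.pow p)) fun z hz =>
    have := hLpos z hz
    by positivity

theorem indexRatio_le_sup'_of_dense (hU : IsOpen U) (hF : AnalyticOnNhd ℂ F U)
    (hL : ContinuousOn L U) (hLpos : ∀ z ∈ U, 0 < L z) {A : Set (EuclideanSpace ℂ (Fin n))}
    (hAU : A ⊆ U) (hUA : U ⊆ closure A) (M : ℕ)
    (hM : ∀ a ∈ A, ∀ p : ℕ, indexRatio F b L p a ≤
      (Finset.range (M + 1)).sup' Finset.nonempty_range_add_one fun k => indexRatio F b L k a)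
    {z : EuclideanSpace ℂ (Fin n)} (hz : z ∈ U) (p : ℕ) :
    indexRatio F b L p z ≤
      (Finset.range (M + 1)).sup' Finset.nonempty_range_add_one fun k => indexRatio F b L k z := by
  have hratio := continuousOn_indexRatio (b := b) hU hF hL hLpos
  have hmax := ContinuousOn.finset_sup'_apply (Finset.nonempty_range_add_one (n := M))
    fun k _ => hratio k
  exact ((hratio p z hz).mono hAU).closure_le (hUA hz) ((hmax z hz).mono hAU) fun a ha => hM a ha p

end IndexRatio

/-- if the index inequality with bound `M` holds along all slices
through points of a set `A` dense in the unit ball, then it holds on the whole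
ball, i.e. `F` has bounded `L`-index in direction `b` with `N_b(F,L) ≤ M`. -/
theorem stmt11 (n : ℕ) (F : EuclideanSpace ℂ (Fin n) → ℂ)
    (b : EuclideanSpace ℂ (Fin n)) (L : EuclideanSpace ℂ (Fin n) → ℝ)
    (hFa : AnalyticOnNhd ℂ F (ball (0 : EuclideanSpace ℂ (Fin n)) 1))
    (hLc : ContinuousOn L (ball (0 : EuclideanSpace ℂ (Fin n)) 1))
    (hLpos : ∀ z ∈ ball (0 : EuclideanSpace ℂ (Fin n)) 1, 0 < L z)
    (A : Set (EuclideanSpace ℂ (Fin n)))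
    (hA : A ⊆ ball (0 : EuclideanSpace ℂ (Fin n)) 1)
    (hAdense : ball (0 : EuclideanSpace ℂ (Fin n)) 1 ⊆ closure A)
    (M : ℕ)
    (hM : ∀ z0 ∈ A, ∀ t : ℂ, z0 + t • b ∈ ball (0 : EuclideanSpace ℂ (Fin n)) 1 →
      ∀ p : ℕ,
        ‖dirDeriv F b p (z0 + t • b)‖ / ((p.factorial : ℝ) * L (z0 + t • b) ^ p) ≤
          (Finset.range (M + 1)).sup' Finset.nonempty_range_add_one
            (fun k => ‖dirDeriv F b k (z0 + t • b)‖ /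
              ((k.factorial : ℝ) * L (z0 + t • b) ^ k))) :
    (∀ z0 ∈ ball (0 : EuclideanSpace ℂ (Fin n)) 1, ∀ t : ℂ,
        z0 + t • b ∈ ball (0 : EuclideanSpace ℂ (Fin n)) 1 → ∀ p : ℕ,
        ‖dirDeriv F b p (z0 + t • b)‖ / ((p.factorial : ℝ) * L (z0 + t • b) ^ p) ≤
          (Finset.range (M + 1)).sup' Finset.nonempty_range_add_one
            (fun k => ‖dirDeriv F b k (z0 + t • b)‖ /
              ((k.factorial : ℝ) * L (z0 + t • b) ^ k))) ∧
      boundedIndexDir F b L M ∧ dirIndex F b L ≤ M := by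
  have hbounded : boundedIndexDir F b L M := fun p z hz =>
    indexRatio_le_sup'_of_dense isOpen_ball hFa hLc hLpos hA hAdense M
      (fun a ha => by
        have hMa := hM a ha 0 (by simpa using hA ha)
        simp only [zero_smul, add_zero] at hMa
        exact hMa) hz p
  exact ⟨fun _ _ _ ht p => hbounded p _ ht, hbounded, Nat.sInf_le hbounded⟩
end
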